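/- arXiv:1112.4625 — 4 statements merged into one kernel-verified Lean document; each statement's English description precedes it below -/
import Mathlib

section
/- Let H be an m×n binary (0-1) matrix regarded over ℤ with m < n, and let β ⊆ [n] with |β| = m+1. Define ω ∈ ℤ^n by ω_i = perm(H_{β∖i}) if i ∈ β and ω_i = 0 otherwise, where H_{β∖i} is the m×m submatrix of H formed by the columns with index in β∖{i}. Then ω lies in the fundamental cone of H: (1) ω_j ≥ 0 for all j ∈ [n]; (2) for every i ∈ [m] and every j with H_{ij} = 1, ω_j ≤ Σ_{j' ≠ j, H_{ij'} = 1} ω_{j'}. -/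
/-!
Write `perm(H_{β∖a})` as a sum over the injections `g` of the rows into `β ∖ {a}` of the weight
`∏ r, H r (g r)`; this form does not depend on how the columns are ordered. Fix a row `i` with
`H i j = 1`. A term of `ω_j` is nonzero only if `H i (g i) = 1`, and then redirecting row `i` to
column `j` turns `g` into an injection into `β ∖ {g i}` of the same weight. The map
`g ↦ (g i, g[i ↦ j])` is injective, so the nonzero terms of `ω_j` reappear among the terms of the
`ω_{j'}` with `j' ≠ j`, `H i j' = 1`; all terms are nonnegative, which gives the inequality.
-/

open Matrix Finset

/-- The permanent of a square matrix over a commutative ring. -/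
def perm {n : Type*} [DecidableEq n] [Fintype n] {R : Type*} [CommRing R]
    (A : Matrix n n R) : R :=
  ∑ σ : Equiv.Perm n, ∏ i, A i (σ i)

open Function

namespace FundamentalCone

variable {ι κ R : Type*} [Fintype ι] [DecidableEq ι] [Fintype κ] [DecidableEq κ]

def injectionsInto (s : Finset κ) : Finset (ι → κ) :=
  univ.filter fun g => Injective g ∧ ∀ k, g k ∈ s

theorem mem_injectionsInto {s : Finset κ} {g : ι → κ} :
    g ∈ injectionsInto s ↔ Injective g ∧ ∀ k, g k ∈ s := by
  simp [injectionsInto]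

theorem update_mem_injectionsInto_erase {s : Finset κ} {j : κ} (hj : j ∈ s) {g : ι → κ}
    (hg : g ∈ injectionsInto (s.erase j)) (i : ι) :
    update g i j ∈ injectionsInto (s.erase (g i)) := by
  obtain ⟨hinj, hmem⟩ := mem_injectionsInto.1 hg
  have hj_ne : ∀ k, g k ≠ j := fun k => ne_of_mem_erase (hmem k)
  refine mem_injectionsInto.2 ⟨fun a b hab => ?_, fun k => ?_⟩
  · by_cases ha : a = i <;> by_cases hb : b = i
    · rw [ha, hb]
    · rw [ha, update_self, update_of_ne hb] at hab
      exact absurd hab.symm (hj_ne b)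
    · rw [hb, update_self, update_of_ne ha] at hab
      exact absurd hab (hj_ne a)
    · rw [update_of_ne ha, update_of_ne hb] at hab
      exact hinj hab
  · by_cases hk : k = i
    · subst hk
      simpa using ⟨(hj_ne k).symm, hj⟩
    · rw [update_of_ne hk]
      exact mem_erase.2 ⟨hinj.ne hk, mem_of_mem_erase (hmem k)⟩

variable [CommRing R]

def colPerm (H : Matrix ι κ R) (s : Finset κ) : R :=
  ∑ g ∈ injectionsInto s, ∏ r, H r (g r)

theorem perm_submatrix_eq_colPerm (H : Matrix ι κ R) (s : Finset κ) (e : ι ≃ s) :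
    perm (H.submatrix id (fun k => (e k : κ))) = colPerm H s := by
  refine sum_bij (fun σ _ k => (e (σ k) : κ)) (fun σ _ => ?_) (fun σ₁ _ σ₂ _ h => ?_)
    (fun g hg => ?_) (fun σ _ => rfl)
  · exact mem_injectionsInto.2
      ⟨Subtype.coe_injective.comp (e.injective.comp σ.injective), fun k => (e (σ k)).2⟩
  · exact Equiv.ext fun k => e.injective (Subtype.ext (congrFun h k))
  · obtain ⟨hinj, hmem⟩ := mem_injectionsInto.1 hg
    have hσ : Injective fun k => e.symm ⟨g k, hmem k⟩ :=
      fun a b hab => hinj (congrArg Subtype.val (e.symm.injective hab))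
    exact ⟨Equiv.ofBijective _ (Finite.injective_iff_bijective.1 hσ), mem_univ _,
      funext fun k => by simp⟩

theorem nonneg_of_eq_zero_or_eq_one [PartialOrder R] [IsOrderedRing R] {a : R}
    (h : a = 0 ∨ a = 1) : 0 ≤ a :=
  h.elim (·.ge) fun h => h ▸ zero_le_one

theorem colPerm_nonneg [PartialOrder R] [IsOrderedRing R] {H : Matrix ι κ R}
    (hH : ∀ i j, 0 ≤ H i j) (s : Finset κ) : 0 ≤ colPerm H s :=
  sum_nonneg fun g _ => prod_nonneg fun r _ => hH r (g r)

theorem colPerm_erase_le_sum [PartialOrder R] [IsOrderedRing R] [DecidableEq R]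
    {H : Matrix ι κ R} (h01 : ∀ i j, H i j = 0 ∨ H i j = 1) {s : Finset κ} {i : ι} {j : κ}
    (hj : j ∈ s) (hij : H i j = 1) :
    colPerm H (s.erase j) ≤ ∑ j' ∈ (s.erase j).filter (H i · = 1), colPerm H (s.erase j') := by
  set A := (injectionsInto (s.erase j)).filter fun g : ι → κ => H i (g i) = 1
  set T := ((s.erase j).filter (H i · = 1)).sigma fun j' => injectionsInto (ι := ι) (s.erase j')
  let redirect : (ι → κ) → (_ : κ) × (ι → κ) := fun g => ⟨g i, update g i j⟩
  have h_redirect_inj : Injective redirect := fun g₁ g₂ h => by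
    obtain ⟨h_at_i, h_updated⟩ := Sigma.mk.inj_iff.1 h
    calc g₁ = update (update g₁ i j) i (g₁ i) := by rw [update_idem, update_eq_self]
      _ = update (update g₂ i j) i (g₂ i) := by rw [eq_of_heq h_updated, h_at_i]
      _ = g₂ := by rw [update_idem, update_eq_self]
  have h_drop_zero : colPerm H (s.erase j) = ∑ g ∈ A, ∏ r, H r (g r) := by
    refine (sum_filter_of_ne fun (g : ι → κ) _ hne => ?_).symm
    exact (h01 i (g i)).resolve_left fun h0 => hne (prod_eq_zero (mem_univ i) h0)
  have h_weight : ∀ g ∈ A, ∏ r, H r (g r) = ∏ r, H r ((redirect g).2 r) := by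
    intro g hg
    refine prod_congr rfl fun r _ => ?_
    rcases eq_or_ne r i with rfl | hr
    · simp [redirect, hij, (mem_filter.1 hg).2]
    · simp [redirect, update_of_ne hr]
  have h_image : A.image redirect ⊆ T := by
    simp only [subset_iff, mem_image, mem_sigma, mem_filter, forall_exists_index, and_imp,
      T, A]
    rintro _ g hg hgi rfl
    exact ⟨⟨(mem_injectionsInto.1 hg).2 i, hgi⟩, update_mem_injectionsInto_erase hj hg i⟩
  calc colPerm H (s.erase j)
      = ∑ g ∈ A, ∏ r, H r ((redirect g).2 r) := h_drop_zero.trans (sum_congr rfl h_weight)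
    _ = ∑ p ∈ A.image redirect, ∏ r, H r (p.2 r) :=
        (sum_image (f := fun p : (_ : κ) × (ι → κ) => ∏ r, H r (p.2 r))
          fun _ _ _ _ h => h_redirect_inj h).symm
    _ ≤ ∑ p ∈ T, ∏ r, H r (p.2 r) :=
        sum_le_sum_of_subset_of_nonneg h_image fun p _ _ =>
          prod_nonneg fun r _ => nonneg_of_eq_zero_or_eq_one (h01 r (p.2 r))
    _ = _ := sum_sigma _ _ _

end FundamentalCone

open FundamentalCone in
theorem stmt1 {m n : ℕ} (H : Matrix (Fin m) (Fin n) ℤ)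
    (h01 : ∀ i j, H i j = 0 ∨ H i j = 1)
    (β : Finset (Fin n)) (hβ : β.card = m + 1)
    (ω : Fin n → ℤ)
    (hω : ∀ i : Fin n,
      ω i = if hi : i ∈ β then
        perm (H.submatrix id (fun k : Fin m =>
          ((β.erase i).orderIsoOfFin
            (by rw [Finset.card_erase_of_mem hi, hβ]; omega) k : Fin n)))
      else 0) :
    (∀ j, 0 ≤ ω j) ∧
    ∀ (i : Fin m) (j : Fin n), H i j = 1 →
      ω j ≤ ∑ j' ∈ (Finset.univ.filter (fun j' => H i j' = 1)).erase j, ω j' := by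
  have hω_eq : ∀ a ∈ β, ω a = colPerm H (β.erase a) := fun a ha => by
    rw [hω a, dif_pos ha]
    exact perm_submatrix_eq_colPerm H _
      ((β.erase a).orderIsoOfFin (by rw [card_erase_of_mem ha, hβ]; omega)).toEquiv
  have hH : ∀ i j, 0 ≤ H i j := fun i j => nonneg_of_eq_zero_or_eq_one (h01 i j)
  have hω_nonneg : ∀ j, 0 ≤ ω j := fun j => by
    by_cases hj : j ∈ β
    · exact hω_eq j hj ▸ colPerm_nonneg hH _
    · rw [hω j, dif_neg hj]
  refine ⟨hω_nonneg, fun i j hij => ?_⟩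
  by_cases hj : j ∈ β
  · calc ω j = colPerm H (β.erase j) := hω_eq j hj
      _ ≤ ∑ j' ∈ (β.erase j).filter (H i · = 1), colPerm H (β.erase j') :=
          colPerm_erase_le_sum h01 hj hij
      _ = ∑ j' ∈ (β.erase j).filter (H i · = 1), ω j' :=
          sum_congr rfl fun j' hj' => (hω_eq j' (mem_of_mem_erase (mem_filter.1 hj').1)).symm
      _ ≤ _ := sum_le_sum_of_subset_of_nonneg
          (fun j' hj' => by grind) fun j' _ _ => hω_nonneg j'
  · rw [hω j, dif_neg hj]
    exact sum_nonneg fun j' _ => hω_nonneg j'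
end

section
/- Let P, Q, R be M×M permutation matrices and I the M×M identity matrix (all viewed over ℤ). Then the permanent of the 3M×3M block matrix [[I, I, 0], [I, P, I], [Q, R, I]] equals perm(I + P + Q + R). -/
/-!
The proof rests on a Schur complement formula for permanents: if every column of `U`
has at most one nonzero entry, then `perm [[X, U], [V, 1]] = perm (X + U * V)`. Expanding the
right side, a term is a permutation `τ` of the rows of `X` together with a partial choice, for each
row `i`, of a column `k` of `U` supported at `i`. The corresponding permutation of the block matrix
is `τ ⊕ 1` composed with the transpositions `i ↔ k`, and the support condition makes this a
weight-preserving bijection onto the nonvanishing terms of the left side.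

Grouping the last block row and column of the 3×3 block matrix apart, one application of the
formula gives `perm [[1, 1], [1 + Q, P + R]]`; transposing and swapping the two blocks, a second
application gives `perm (1 + Q + P + R)`.
-/

open Matrix Finset

/-- `P` is a permutation matrix. -/
def IsPermMatrix {M : ℕ} (P : Matrix (Fin M) (Fin M) ℤ) : Prop :=
  ∃ σ : Equiv.Perm (Fin M), ∀ i j, P i j = if σ i = j then 1 else 0

open Equiv

theorem Equiv.Perm.exists_sumCongr_one_of_forall_inr {α β : Type*} [Finite α] [Finite β]
    {ρ : Perm (α ⊕ β)} (h : ∀ b, ρ (.inr b) = .inr b) : ∃ τ : Perm α, Perm.sumCongr τ 1 = ρ := by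
  have hinr : Set.MapsTo ρ (Set.range Sum.inr) (Set.range Sum.inr) := by
    rintro _ ⟨b, rfl⟩
    exact ⟨b, (h b).symm⟩
  obtain ⟨⟨τ, τ'⟩, hτ⟩ := Perm.mem_sumCongrHom_range_of_perm_mapsTo_inl
    ((Perm.perm_mapsTo_inl_iff_mapsTo_inr ρ).mpr hinr)
  have hτ' : τ' = 1 := Equiv.ext fun b => by simpa [← hτ] using h b
  exact ⟨τ, by simpa [hτ'] using hτ⟩

theorem Matrix.fromBlocks_fromCols_fromRows_submatrix_sumAssoc {α l₁ l₂ l₃ m₁ m₂ m₃ : Type*}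
    (A : Matrix l₁ m₁ α) (B₁ : Matrix l₁ m₂ α) (B₂ : Matrix l₁ m₃ α) (C₁ : Matrix l₂ m₁ α)
    (C₂ : Matrix l₃ m₁ α) (D₁₁ : Matrix l₂ m₂ α) (D₁₂ : Matrix l₂ m₃ α) (D₂₁ : Matrix l₃ m₂ α)
    (D₂₂ : Matrix l₃ m₃ α) :
    (fromBlocks A (fromCols B₁ B₂) (fromRows C₁ C₂) (fromBlocks D₁₁ D₁₂ D₂₁ D₂₂)).submatrix
      (sumAssoc _ _ _) (sumAssoc _ _ _) =
      fromBlocks (fromBlocks A B₁ C₁ D₁₁) (fromRows B₂ D₁₂) (fromCols C₂ D₂₁) D₂₂ := by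
  ext ((i | i) | i) ((j | j) | j) <;> rfl

section Perm

variable {m n R : Type*} [Fintype m] [DecidableEq m] [Fintype n] [DecidableEq n] [CommRing R]

theorem perm_transpose (A : Matrix n n R) : perm Aᵀ = perm A :=
  permanent_transpose Aᵀ

theorem perm_submatrix_equiv (A : Matrix n n R) (e : m ≃ n) :
    perm (A.submatrix e e) = perm A :=
  Fintype.sum_equiv e.permCongr _ _ fun _ => Fintype.prod_equiv e _ _ fun _ => by simp

end Perm

section Matching

variable {m n : Type*} [DecidableEq n]

def IsPartialSection (f : n → m) (c : m → Option n) : Prop :=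
  ∀ i k, c i = some k → f k = i

/-- The product of the transpositions `inl i ↔ inr k` over the pairs with `c i = some k`. -/
def swapMatched (f : n → m) (c : m → Option n) : m ⊕ n → m ⊕ n
  | .inl i => (c i).elim (.inl i) .inr
  | .inr k => if c (f k) = some k then .inl (f k) else .inr k

variable {f : n → m} {c : m → Option n}

theorem swapMatched_involutive (hc : IsPartialSection f c) :
    Function.Involutive (swapMatched f c) := by
  rintro (i | k)
  · cases h : c i with
    | none => simp [swapMatched, h]
    | some k => simp [swapMatched, h, hc i k h]
  · by_cases h : c (f k) = some k <;> simp [swapMatched, h]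

def matchedPerm (hc : IsPartialSection f c) : Perm (m ⊕ n) :=
  (swapMatched_involutive hc).toPerm _

theorem matchedPerm_mul_self (hc : IsPartialSection f c) :
    matchedPerm hc * matchedPerm hc = 1 :=
  Equiv.ext (swapMatched_involutive hc)

def blockPerm (τ : Perm m) (hc : IsPartialSection f c) : Perm (m ⊕ n) :=
  Perm.sumCongr τ 1 * matchedPerm hc

theorem getRight?_blockPerm_inl (τ : Perm m) (hc : IsPartialSection f c) (i : m) :
    (blockPerm τ hc (.inl i)).getRight? = c i := by
  cases h : c i <;> simp [blockPerm, matchedPerm, swapMatched, h]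

theorem blockPerm_inj {τ τ' : Perm m} {c' : m → Option n}
    (hc : IsPartialSection f c) (hc' : IsPartialSection f c')
    (h : blockPerm τ hc = blockPerm τ' hc') : τ = τ' ∧ c = c' := by
  obtain rfl : c = c' := funext fun i => by
    rw [← getRight?_blockPerm_inl τ hc, h, getRight?_blockPerm_inl τ' hc']
  refine ⟨Equiv.ext fun i => ?_, rfl⟩
  simpa using congrArg (· (.inl i)) (mul_right_cancel h)

theorem IsPartialSection.prod_ite_eq_prod_elim [Fintype m] [DecidableEq m] [Fintype n]
    {β : Type*} [CommMonoid β] (hc : IsPartialSection f c) (g : n → β) :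
    ∏ k, (if c (f k) = some k then g k else 1) = ∏ i, (c i).elim 1 g := by
  rw [← Finset.prod_fiberwise univ f]
  refine Finset.prod_congr rfl fun i _ => ?_
  rw [Finset.prod_congr rfl fun k hk => by rw [(Finset.mem_filter.mp hk).2]]
  cases h : c i with
  | none => simp
  | some k => simp [Finset.prod_ite_eq, hc i k h]

end Matching

section Schur

variable {m n R : Type*} [CommRing R] (X : Matrix m m R) (U : Matrix m n R) (V : Matrix n m R)

def addMulSummand (i j : m) : Option n → R
  | none => X i j
  | some k => U i k * V k j

theorem add_mul_apply_eq_sum [Fintype n] (i j : m) :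
    (X + U * V) i j = ∑ o, addMulSummand X U V i j o := by
  simp [Fintype.sum_option, addMulSummand, mul_apply]

variable {X U V} [Fintype m] {f : n → m}

theorem isPartialSection_of_prod_addMulSummand_ne_zero (hU : ∀ i k, i ≠ f k → U i k = 0)
    {τ : Perm m} {c : m → Option n} (h : ∏ i, addMulSummand X U V i (τ i) (c i) ≠ 0) :
    IsPartialSection f c := by
  intro i k hik
  by_contra hne
  exact h <| Finset.prod_eq_zero (Finset.mem_univ i) <| by
    simp [addMulSummand, hik, hU i k (Ne.symm hne)]

variable [DecidableEq m] [Fintype n]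

theorem perm_add_mul_eq_sum :
    perm (X + U * V) =
      ∑ p : Perm m × (m → Option n), ∏ i, addMulSummand X U V i (p.1 i) (p.2 i) := by
  simp only [perm, add_mul_apply_eq_sum, Finset.prod_univ_sum, Fintype.piFinset_univ,
    Fintype.sum_prod_type]

variable [DecidableEq n]

theorem prod_fromBlocks_blockPerm {c : m → Option n} (hc : IsPartialSection f c)
    (τ : Perm m) :
    ∏ x, fromBlocks X U V 1 x (blockPerm τ hc x) =
      ∏ i, addMulSummand X U V i (τ i) (c i) := by
  have hinl : ∀ i, fromBlocks X U V 1 (.inl i) (blockPerm τ hc (.inl i)) =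
      (c i).elim (X i (τ i)) (U i) := fun i => by
    cases h : c i <;> simp [blockPerm, matchedPerm, swapMatched, h]
  have hinr : ∀ k, fromBlocks X U V 1 (.inr k) (blockPerm τ hc (.inr k)) =
      if c (f k) = some k then V k (τ (f k)) else 1 := fun k => by
    by_cases h : c (f k) = some k <;> simp [blockPerm, matchedPerm, swapMatched, h]
  rw [Fintype.prod_sum_type, Finset.prod_congr rfl fun i _ => hinl i,
    Finset.prod_congr rfl fun k _ => hinr k, hc.prod_ite_eq_prod_elim,
    ← Finset.prod_mul_distrib]
  refine Finset.prod_congr rfl fun i _ => ?_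
  cases h : c i with
  | none => simp [addMulSummand]
  | some k => simp [addMulSummand, hc i k h]

theorem exists_blockPerm_eq (hU : ∀ i k, i ≠ f k → U i k = 0)
    {σ : Perm (m ⊕ n)} (hσ : ∀ x, fromBlocks X U V 1 x (σ x) ≠ 0) :
    ∃ (τ : Perm m) (c : m → Option n) (hc : IsPartialSection f c), blockPerm τ hc = σ := by
  set c : m → Option n := fun i => (σ (.inl i)).getRight?
  have hσc : ∀ i k, c i = some k ↔ σ (.inl i) = .inr k := fun i k => by simp [c]
  have hc : IsPartialSection f c := fun i k h => by
    by_contra hne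
    exact hσ (.inl i) (by rw [(hσc i k).mp h]; exact hU i k (Ne.symm hne))
  have hdiag : ∀ k k', σ (.inr k) = .inr k' → k = k' := fun k k' h => by
    by_contra hne
    exact hσ (.inr k) (by rw [h]; simp [hne])
  have hfix : ∀ k, (σ * matchedPerm hc) (.inr k) = .inr k := by
    intro k
    by_cases h : c (f k) = some k
    · simpa [matchedPerm, swapMatched, h] using (hσc _ _).mp h
    · simp only [matchedPerm, swapMatched, h, Perm.mul_apply, Function.Involutive.coe_toPerm,
        if_false]
      -- column `inr k` is hit by row `inr k` or by a row `inl i` with `c i = some k` (excluded)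
      rcases hy : σ.symm (.inr k) with i | k'
      · have hci : c i = some k := (hσc i k).mpr (by rw [← hy, Equiv.apply_symm_apply])
        rw [hc i k hci] at h
        exact absurd hci h
      · have hk' : σ (.inr k') = .inr k := by rw [← hy, Equiv.apply_symm_apply]
        obtain rfl := hdiag k' k hk'
        exact hk'
  obtain ⟨τ, hτ⟩ := Perm.exists_sumCongr_one_of_forall_inr hfix
  exact ⟨τ, c, hc, by rw [blockPerm, hτ, mul_assoc, matchedPerm_mul_self, mul_one]⟩

theorem perm_fromBlocks_one (hU : ∀ i k, i ≠ f k → U i k = 0) :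
    perm (fromBlocks X U V 1) = perm (X + U * V) := by
  rw [perm_add_mul_eq_sum, perm]
  symm
  refine Finset.sum_bij_ne_zero
    (fun p _ hp => blockPerm p.1 (isPartialSection_of_prod_addMulSummand_ne_zero hU hp))
    (fun _ _ _ => Finset.mem_univ _) ?_ ?_ ?_
  · rintro ⟨τ, c⟩ _ _ ⟨τ', c'⟩ _ _ h
    obtain ⟨rfl, rfl⟩ := blockPerm_inj _ _ h
    rfl
  · intro σ _ hσ
    obtain ⟨τ, c, hc, rfl⟩ := exists_blockPerm_eq hU fun x hx =>
      hσ (Finset.prod_eq_zero (Finset.mem_univ x) hx)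
    refine ⟨(τ, c), Finset.mem_univ _, ?_, rfl⟩
    rwa [← prod_fromBlocks_blockPerm hc]
  · rintro ⟨τ, c⟩ _ _
    exact (prod_fromBlocks_blockPerm _ τ).symm

end Schur

theorem perm_fromBlocks_one_one {m R : Type*} [Fintype m] [DecidableEq m] [CommRing R]
    (S T : Matrix m m R) :
    perm (fromBlocks 1 1 S T) = perm (S + T) := by
  have hswap := perm_submatrix_equiv (fromBlocks Tᵀ 1 Sᵀ 1) (sumComm m m)
  rw [sumComm_apply, fromBlocks_submatrix_sum_swap_sum_swap,
    perm_fromBlocks_one (U := 1) (f := id) fun _ _ => one_apply_ne, one_mul] at hswap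
  rw [← perm_transpose, fromBlocks_transpose, transpose_one, hswap, ← transpose_add,
    perm_transpose, add_comm]

theorem stmt4_general {M : ℕ} (P Q R : Matrix (Fin M) (Fin M) ℤ) :
    perm (Matrix.fromBlocks 1 (Matrix.fromCols 1 0) (Matrix.fromRows 1 Q)
      (Matrix.fromBlocks P 1 R 1)) = perm (1 + P + Q + R) := by
  rw [← perm_submatrix_equiv _ (sumAssoc _ _ _), fromBlocks_fromCols_fromRows_submatrix_sumAssoc,
    perm_fromBlocks_one (f := Sum.inr) (by rintro (i | i) k h <;> simp_all [one_apply_ne]),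
    fromRows_mul_fromCols, fromBlocks_add]
  simp only [zero_mul, one_mul, add_zero]
  rw [perm_fromBlocks_one_one]
  congr 1
  abel

theorem stmt4 {M : ℕ} (P Q R : Matrix (Fin M) (Fin M) ℤ)
    (hP : IsPermMatrix P) (hQ : IsPermMatrix Q) (hR : IsPermMatrix R) :
    perm (Matrix.fromBlocks 1 (Matrix.fromCols 1 0) (Matrix.fromRows 1 Q)
      (Matrix.fromBlocks P 1 R 1)) = perm (1 + P + Q + R) :=
  stmt4_general P Q R
end

section
/- For every integer M ≥ 1, the average over all M×M permutation matrices P of perm(I + P) equals M + 1; that is, (1/M!) · Σ_{P ∈ P_M} perm(I + P) = M + 1, where the permanent is over ℤ and P_M is the set of M×M permutation matrices. -/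
/-!
Write `perm (1 + P_σ) = ∑_τ ∏_i ([τ i = σ i] + [τ i = i])` and expand the product over the set
`t` of indices at which `τ` follows `σ`: the term of `t` survives for exactly one `τ` when
`t.piecewise σ id` is injective, i.e. when `σ` maps `t` into itself, and vanishes otherwise.
So `perm (1 + P_σ)` counts the `σ`-invariant subsets. Swapping the two sums, a subset `S` is
invariant under `|S|! (M - |S|)!` permutations, and summing over `S` by size gives
`∑_k binom(M, k) k! (M - k)! = (M + 1) M!`.
-/

open Matrix Finset

open Nat

namespace Equiv.Perm

variable {α : Type*} [DecidableEq α]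

theorem injective_piecewise_id_iff (σ : Perm α) (t : Finset α) :
    Function.Injective (t.piecewise σ id) ↔ ∀ i ∈ t, σ i ∈ t := by
  constructor
  · intro hinj i hi
    by_contra hσi
    have : t.piecewise σ id (σ i) = t.piecewise σ id i := by
      simp [hi, hσi]
    exact hσi (by rwa [hinj this])
  · intro h i j hij
    by_cases hi : i ∈ t <;> by_cases hj : j ∈ t <;>
      simp only [Finset.piecewise, hi, hj, if_true, if_false, id] at hij
    · exact σ.injective hij
    · exact absurd (hij ▸ h i hi) hj
    · exact absurd (hij ▸ h j hj) hi
    · exact hij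

variable [Fintype α]

theorem sum_prod_ite_apply_eq {R : Type*} [CommSemiring R] (h : α → α) :
    ∑ τ : Perm α, ∏ i, (if τ i = h i then (1 : R) else 0) =
      if Function.Injective h then 1 else 0 := by
  simp_rw [prod_boole, mem_univ, true_imp_iff]
  split_ifs with hh
  · let e := Equiv.ofBijective h (Finite.injective_iff_bijective.mp hh)
    have key : ∀ τ : Perm α, (∀ i, τ i = h i) ↔ τ = e :=
      fun τ => ⟨fun hτ => Equiv.ext fun i => hτ i, fun hτ i => by rw [hτ]; rfl⟩
    simp_rw [key, sum_ite_eq', mem_univ, if_true]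
  · refine sum_eq_zero fun τ _ => if_neg fun hτ => hh ?_
    simpa only [← funext hτ] using τ.injective

theorem sum_prod_ite_add_ite {R : Type*} [CommSemiring R] (f g : α → α) :
    ∑ τ : Perm α, ∏ i, ((if τ i = f i then (1 : R) else 0) + if τ i = g i then 1 else 0) =
      #{t : Finset α | Function.Injective (t.piecewise f g)} := by
  have hpiecewise : ∀ (τ : Perm α) (t : Finset α),
      (∏ i ∈ t, if τ i = f i then (1 : R) else 0) * ∏ i ∈ univ \ t, (if τ i = g i then 1 else 0)
        = ∏ i, if τ i = t.piecewise f g i then 1 else 0 := fun τ t => by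
    have := prod_piecewise univ t (fun i => if τ i = f i then (1 : R) else 0)
      (fun i => if τ i = g i then 1 else 0)
    rw [univ_inter] at this
    rw [← this]
    refine prod_congr rfl fun i _ => ?_
    by_cases hi : i ∈ t <;> simp [hi]
  simp_rw [prod_add, hpiecewise]
  rw [sum_comm, powerset_univ]
  simp_rw [sum_prod_ite_apply_eq, sum_boole]

theorem card_filter_mapsTo (S : Finset α) :
    #{σ : Perm α | ∀ i ∈ S, σ i ∈ S} = (#S)! * (Fintype.card α - #S)! := by
  have hstab : ∀ σ : Perm α, (∀ i ∈ S, σ i ∈ S) ↔ (· ∈ S) ∘ σ = (· ∈ S) := fun σ => by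
    refine ⟨fun h => funext fun x => propext ⟨fun hx => ?_, h x⟩, fun h i hi => ?_⟩
    · simpa using perm_symm_on_of_perm_on_finset h hx
    · exact (congrFun h i).mpr hi
  classical
  simp_rw [hstab]
  rw [← Fintype.card_subtype, DomMulAct.stabilizer_card, Fintype.prod_Prop]
  simp only [eq_iff_iff, iff_true, iff_false, Fintype.card_coe, Fintype.card_subtype_compl]

end Equiv.Perm

theorem Finset.sum_factorial_card_mul_factorial_sub_card (α : Type*) [Fintype α] :
    ∑ S : Finset α, (#S)! * (Fintype.card α - #S)! = (Fintype.card α + 1) * (Fintype.card α)! := by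
  rw [← powerset_univ, sum_powerset_apply_card (fun m => m ! * (Fintype.card α - m)!), card_univ]
  have hterm : ∀ m ∈ range (Fintype.card α + 1),
      (Fintype.card α).choose m • (m ! * (Fintype.card α - m)!) = (Fintype.card α)! :=
    fun m hm => by
      rw [smul_eq_mul, ← mul_assoc,
        Nat.choose_mul_factorial_mul_factorial (Nat.lt_succ_iff.mp (mem_range.mp hm))]
  rw [sum_congr rfl hterm, sum_const, card_range, smul_eq_mul]

section

variable {α : Type*} [Fintype α] [DecidableEq α]

theorem perm_one_add_permMatrix_eq_card_mapsTo {R : Type*} [CommRing R] (σ : Equiv.Perm α) :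
    perm ((1 : Matrix α α R) + Matrix.of fun i j => if σ i = j then (1 : R) else 0) =
      #{S : Finset α | ∀ i ∈ S, σ i ∈ S} := by
  have hentry : ∀ (τ : Equiv.Perm α) (i : α),
      ((1 : Matrix α α R) + Matrix.of fun i j => if σ i = j then (1 : R) else 0) i (τ i) =
        (if τ i = σ i then 1 else 0) + if τ i = id i then 1 else 0 := fun τ i => by
    simp [one_apply, eq_comm, add_comm]
  simp_rw [perm, hentry, Equiv.Perm.sum_prod_ite_add_ite, Equiv.Perm.injective_piecewise_id_iff]

theorem sum_card_filter_mapsTo :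
    ∑ σ : Equiv.Perm α, #{S : Finset α | ∀ i ∈ S, σ i ∈ S} =
      (Fintype.card α + 1) * (Fintype.card α)! := by
  rw [← sum_factorial_card_mul_factorial_sub_card α]
  simp_rw [← Equiv.Perm.card_filter_mapsTo, card_filter]
  exact sum_comm

end

theorem stmt7_general {M : ℕ} :
    ∑ σ : Equiv.Perm (Fin M),
      perm ((1 : Matrix (Fin M) (Fin M) ℤ) +
        Matrix.of fun i j => if σ i = j then (1 : ℤ) else 0) =
    ((M : ℤ) + 1) * (M.factorial : ℤ) := by
  have h := sum_card_filter_mapsTo (α := Fin M)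
  rw [Fintype.card_fin] at h
  simp_rw [perm_one_add_permMatrix_eq_card_mapsTo]
  rw [← Nat.cast_sum, h, Nat.cast_mul, Nat.cast_succ]

theorem stmt7 {M : ℕ} (hM : 1 ≤ M) :
    ∑ σ : Equiv.Perm (Fin M),
      perm ((1 : Matrix (Fin M) (Fin M) ℤ) +
        Matrix.of fun i j => if σ i = j then (1 : ℤ) else 0) =
    ((M : ℤ) + 1) * (M.factorial : ℤ) :=
  stmt7_general
end

section
/- For every integer M ≥ 1, Σ_{r=0}^{M} Σ_{s=0}^{r} C(M, r) C(r, s) (M−r+s)! (M−s)! r! ≤ (M!)² · (2^{M+1} − 1). -/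
/-!
Writing `(M - r + s)! = C(M - r + s, s) s! (M - r)!` and bounding `C(r, s) ≤ C(M, s)`, each term is
at most `(M!)² C(M - r + s, s)`. By the hockey-stick identity the inner sum of these binomials is
`C(M + 1, r)`, and summing over `r ≤ M` gives `2 ^ (M + 1) - 1`.
-/

open Matrix Finset

open Nat

theorem Nat.choose_mul_choose_mul_factorial_le {M r s : ℕ} (hr : r ≤ M) (hs : s ≤ r) :
    M.choose r * r.choose s * (M - r + s)! * (M - s)! * r !
      ≤ M ! ^ 2 * (M - r + s).choose s := by
  have hMr := choose_mul_factorial_mul_factorial hr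
  have hMs := choose_mul_factorial_mul_factorial (hs.trans hr)
  have hfac := add_choose_mul_factorial_mul_factorial (M - r) s
  calc M.choose r * r.choose s * (M - r + s)! * (M - s)! * r !
      ≤ M.choose r * M.choose s * (M - r + s)! * (M - s)! * r ! := by
        gcongr
    _ = (M.choose r * r ! * (M - r)!) * (M.choose s * s ! * (M - s)!) * (M - r + s).choose s := by
        rw [← hfac]; ring
    _ = M ! ^ 2 * (M - r + s).choose s := by rw [hMr, hMs, sq]

theorem Nat.sum_range_add_choose_self (n r : ℕ) :
    ∑ s ∈ range (r + 1), (n + s).choose s = (n + r + 1).choose r := by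
  calc ∑ s ∈ range (r + 1), (n + s).choose s
      = ∑ s ∈ range (r + 1), (s + n).choose n := by
        refine sum_congr rfl fun s _ => ?_
        rw [add_comm, choose_symm_add]
    _ = (n + r + 1).choose r := by
        rw [sum_range_add_choose, choose_symm_of_eq_add (show r + n + 1 = (n + 1) + r by ring)]
        ring_nf

theorem Nat.sum_range_choose_eq_two_pow_sub_one (n : ℕ) :
    ∑ r ∈ range n, n.choose r = 2 ^ n - 1 := by
  have h := sum_range_choose n
  rw [sum_range_succ, choose_self] at h
  omega

theorem stmt11_general (M : ℕ) :
    ∑ r ∈ Finset.range (M + 1), ∑ s ∈ Finset.range (r + 1),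
      M.choose r * r.choose s * (M - r + s).factorial * (M - s).factorial * r.factorial
    ≤ M.factorial ^ 2 * (2 ^ (M + 1) - 1) := by
  have hinner : ∀ r ∈ range (M + 1),
      ∑ s ∈ range (r + 1), (M - r + s).choose s = (M + 1).choose r := fun r hr => by
    rw [sum_range_add_choose_self, Nat.sub_add_cancel (mem_range_succ_iff.mp hr)]
  calc ∑ r ∈ range (M + 1), ∑ s ∈ range (r + 1),
        M.choose r * r.choose s * (M - r + s)! * (M - s)! * r !
      ≤ ∑ r ∈ range (M + 1), M ! ^ 2 * ∑ s ∈ range (r + 1), (M - r + s).choose s := by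
        refine sum_le_sum fun r hr => ?_
        rw [mul_sum]
        exact sum_le_sum fun s hs =>
          choose_mul_choose_mul_factorial_le (mem_range_succ_iff.mp hr) (mem_range_succ_iff.mp hs)
    _ = M ! ^ 2 * (2 ^ (M + 1) - 1) := by
        rw [← mul_sum, sum_congr rfl hinner, sum_range_choose_eq_two_pow_sub_one]

theorem stmt11 (M : ℕ) (hM : 1 ≤ M) :
    ∑ r ∈ Finset.range (M + 1), ∑ s ∈ Finset.range (r + 1),
      M.choose r * r.choose s * (M - r + s).factorial * (M - s).factorial * r.factorial
    ≤ M.factorial ^ 2 * (2 ^ (M + 1) - 1) :=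
  stmt11_general M
end
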